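/- Let β_0 ≤ β_1 ≤ … ≤ β_T be a positive non-decreasing sequence, ξ_0 = 0, ξ_t = ξ_{t-1} + g_t for vectors g_1,…,g_T ∈ ℝ^M, and θ_{t-1} = −∇R*_{β_{t-1}}(ξ_{t-1}). Then for every θ in the probability simplex Δ_M: Σ_{t=1}^T ⟨θ_{t-1} − θ, g_t⟩ ≤ β_T R(θ) + Σ_{t=1}^T ‖g_t‖_∞² / (2β_{t-1}), where R is the normalized entropy. -/

import Mathlib

/-!
With `Φ_t = R*_{β_t}(ξ_t)`, the potential `Ψ_t = Φ_t + ⟨θ, ξ_t⟩` telescopes. Each step costs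
at most `‖g_{t+1}‖_∞² / (2β_t)` more than `⟨θ_t - θ, g_{t+1}⟩`: at fixed `β`, the increment
`R*_β(ξ + g) - R*_β(ξ)` is `β` times the log-moment generating function of `-g/β` under the
Gibbs distribution `θ_t`, which Hoeffding's lemma controls, and raising `β` only decreases `R*`
because `R*_β(z) = max_p (-⟨p, z⟩ - β R(p))` with `R ≥ 0`. Finally `Ψ_0 = 0` and
`-Ψ_T ≤ β_T R(θ)` is the Fenchel–Young inequality, i.e. Gibbs' inequality.
-/

open Real Finset MeasureTheory ProbabilityTheory

theorem mul_log_sub_log_le {θ a : ℝ} (hθ : 0 ≤ θ) (ha : 0 < a) :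
    θ * (log a - log θ) ≤ a - θ := by
  rcases hθ.eq_or_lt with rfl | hθ
  · simpa using ha.le
  · calc θ * (log a - log θ) = θ * log (a / θ) := by rw [log_div ha.ne' hθ.ne']
      _ ≤ θ * (a / θ - 1) := by gcongr; exact log_le_sub_one_of_pos (div_pos ha hθ)
      _ = a - θ := by field_simp

theorem sum_mul_log_sub_log_le_log_sum {ι : Type*} [Fintype ι] {θ : ι → ℝ}
    (hθ : θ ∈ stdSimplex ℝ ι) {a : ι → ℝ} (ha : ∀ j, 0 < a j) :
    ∑ j, θ j * (log (a j) - log (θ j)) ≤ log (∑ j, a j) := by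
  have hS : 0 < ∑ j, a j := by
    obtain ⟨j⟩ : Nonempty ι := by
      by_contra h
      simpa [not_nonempty_iff.mp h] using hθ.2
    exact Finset.sum_pos (fun j _ => ha j) ⟨j, mem_univ j⟩
  have key : ∀ j, θ j * (log (a j / ∑ k, a k) - log (θ j)) ≤ a j / ∑ k, a k - θ j :=
    fun j => mul_log_sub_log_le (hθ.1 j) (div_pos (ha j) hS)
  have hsum := Finset.sum_le_sum fun j (_ : j ∈ univ) => key j
  simp only [log_div (ha _).ne' hS.ne', Finset.sum_sub_distrib, ← Finset.sum_div, div_self hS.ne',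
    mul_sub, ← Finset.sum_mul, hθ.2] at hsum
  simp only [mul_sub, Finset.sum_sub_distrib]
  linarith

/-- Hoeffding's lemma for a distribution on a finite type. -/
theorem log_sum_mul_exp_le {ι : Type*} [Fintype ι] {p : ι → ℝ} (hp : p ∈ stdSimplex ℝ ι)
    (X : ι → ℝ) {c : ℝ} (hX : ∀ j, |X j| ≤ c) :
    log (∑ j, p j * exp (X j)) ≤ ∑ j, p j * X j + c ^ 2 / 2 := by
  let : MeasurableSpace ι := ⊤
  have hp1 : ∑ j, ENNReal.ofReal (p j) = 1 := by
    rw [← ENNReal.ofReal_sum_of_nonneg fun j _ => hp.1 j, hp.2, ENNReal.ofReal_one]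
  set μ := (PMF.ofFintype _ hp1).toMeasure
  have hint : ∀ f : ι → ℝ, ∫ x, f x ∂μ = ∑ j, p j * f j := fun f => by
    rw [integral_fintype .of_finite]
    refine Finset.sum_congr rfl fun j _ => ?_
    rw [measureReal_def, PMF.toMeasure_apply_singleton _ _ (measurableSet_singleton j),
      PMF.ofFintype_apply, ENNReal.toReal_ofReal (hp.1 j), smul_eq_mul]
  have hoeffding := (hasSubgaussianMGF_of_mem_Icc (μ := μ) (a := -c) (b := c) (X := X)
    (measurable_of_finite X).aemeasurable (ae_of_all _ fun j => abs_le.mp (hX j))).mgf_le 1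
  have hpos := mgf_pos (X := X) (μ := μ) (t := 1) .of_finite
  simp only [mgf, hint, one_mul, one_pow, mul_one] at hoeffding hpos
  have hvar : (((‖c - -c‖₊ / 2) ^ 2 : NNReal) : ℝ) = c ^ 2 := by
    simp [div_pow, sq_abs]
    ring
  have hshift : ∑ j, p j * exp (X j - ∑ j, p j * X j) =
      (∑ j, p j * exp (X j)) / exp (∑ j, p j * X j) := by
    simp only [exp_sub, Finset.sum_div, mul_div_assoc]
  rw [hvar, hshift, div_le_iff₀ (exp_pos _), ← exp_add, add_comm] at hoeffding
  exact (log_le_iff_le_exp hpos).2 hoeffding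

section EntropyConjugate

variable {ι : Type*} [Fintype ι]

noncomputable def normalizedEntropy (θ : ι → ℝ) : ℝ :=
  log (Fintype.card ι) + ∑ j, θ j * log (θ j)

/-- `R*_β`; its gradient is `-gibbs β`. -/
noncomputable def entropyConjugate (β : ℝ) (z : ι → ℝ) : ℝ :=
  β * log ((∑ j, exp (-z j / β)) / Fintype.card ι)

noncomputable def gibbs (β : ℝ) (z : ι → ℝ) : ι → ℝ :=
  fun j => exp (-z j / β) / ∑ k, exp (-z k / β)

theorem sum_exp_neg_div_pos [Nonempty ι] (β : ℝ) (z : ι → ℝ) : 0 < ∑ j, exp (-z j / β) := by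
  positivity

theorem gibbs_mem_stdSimplex [Nonempty ι] (β : ℝ) (z : ι → ℝ) : gibbs β z ∈ stdSimplex ℝ ι :=
  ⟨fun j => by unfold gibbs; positivity, by
    simp only [gibbs, ← Finset.sum_div, div_self (sum_exp_neg_div_pos β z).ne']⟩

theorem entropyConjugate_zero (β : ℝ) : entropyConjugate β (0 : ι → ℝ) = 0 := by
  simp [entropyConjugate]

theorem entropyConjugate_eq [Nonempty ι] (β : ℝ) (z : ι → ℝ) :
    entropyConjugate β z = β * (log (∑ j, exp (-z j / β)) - log (Fintype.card ι)) := by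
  rw [entropyConjugate, log_div (sum_exp_neg_div_pos β z).ne' (by simp)]

theorem mul_sum_mul_neg_div {β : ℝ} (hβ : β ≠ 0) (p z : ι → ℝ) :
    β * ∑ j, p j * (-z j / β) = -∑ j, p j * z j := by
  rw [Finset.mul_sum, ← Finset.sum_neg_distrib]
  exact Finset.sum_congr rfl fun j _ => by field_simp

theorem fenchel_young_entropyConjugate [Nonempty ι] {β : ℝ} (hβ : 0 < β) (z : ι → ℝ)
    {θ : ι → ℝ} (hθ : θ ∈ stdSimplex ℝ ι) :
    -∑ j, θ j * z j - β * normalizedEntropy θ ≤ entropyConjugate β z := by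
  have gibbsIneq := sum_mul_log_sub_log_le_log_sum hθ fun j => exp_pos (-z j / β)
  simp only [log_exp, mul_sub, Finset.sum_sub_distrib] at gibbsIneq
  have := mul_le_mul_of_nonneg_left gibbsIneq hβ.le
  rw [mul_sub, mul_sum_mul_neg_div hβ.ne'] at this
  rw [entropyConjugate_eq, normalizedEntropy]
  linear_combination this

theorem normalizedEntropy_nonneg [Nonempty ι] {θ : ι → ℝ} (hθ : θ ∈ stdSimplex ℝ ι) :
    0 ≤ normalizedEntropy θ := by
  simpa [entropyConjugate_zero] using fenchel_young_entropyConjugate one_pos 0 hθ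

theorem entropyConjugate_eq_gibbs [Nonempty ι] {β : ℝ} (hβ : β ≠ 0) (z : ι → ℝ) :
    entropyConjugate β z =
      -∑ j, gibbs β z j * z j - β * normalizedEntropy (gibbs β z) := by
  have hS := sum_exp_neg_div_pos β z
  have hlog : ∀ j, log (gibbs β z j) = -z j / β - log (∑ k, exp (-z k / β)) := fun j => by
    rw [gibbs, log_div (exp_pos _).ne' hS.ne', log_exp]
  have hent : ∑ j, gibbs β z j * log (gibbs β z j) =
      ∑ j, gibbs β z j * (-z j / β) - log (∑ k, exp (-z k / β)) := by
    simp only [hlog, mul_sub, Finset.sum_sub_distrib, ← Finset.sum_mul,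
      (gibbs_mem_stdSimplex β z).2, one_mul]
  rw [entropyConjugate_eq, normalizedEntropy, hent]
  linear_combination mul_sum_mul_neg_div hβ (gibbs β z) z

theorem entropyConjugate_le_of_le [Nonempty ι] {β β' : ℝ} (hβ : 0 < β) (hββ' : β ≤ β')
    (z : ι → ℝ) : entropyConjugate β' z ≤ entropyConjugate β z := by
  have hp := gibbs_mem_stdSimplex β' z
  calc entropyConjugate β' z
      = -∑ j, gibbs β' z j * z j - β' * normalizedEntropy (gibbs β' z) :=
        entropyConjugate_eq_gibbs (hβ.trans_le hββ').ne' z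
    _ ≤ -∑ j, gibbs β' z j * z j - β * normalizedEntropy (gibbs β' z) := by
        gcongr
        exact normalizedEntropy_nonneg hp
    _ ≤ entropyConjugate β z := fenchel_young_entropyConjugate hβ z hp

theorem entropyConjugate_add_le [Nonempty ι] {β : ℝ} (hβ : 0 < β) (z g : ι → ℝ) :
    entropyConjugate β (z + g) ≤
      entropyConjugate β z - ∑ j, gibbs β z j * g j + ‖g‖ ^ 2 / (2 * β) := by
  have hS := sum_exp_neg_div_pos β z
  have hbound : ∀ j, |-g j / β| ≤ ‖g‖ / β := fun j => by
    rw [abs_div, abs_neg, abs_of_pos hβ, ← Real.norm_eq_abs]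
    gcongr
    exact norm_le_pi_norm g j
  have hoeffding := log_sum_mul_exp_le (gibbs_mem_stdSimplex β z) _ hbound
  have hratio : ∑ j, gibbs β z j * exp (-g j / β) =
      (∑ j, exp (-(z + g) j / β)) / ∑ j, exp (-z j / β) := by
    rw [Finset.sum_div]
    refine Finset.sum_congr rfl fun j _ => ?_
    rw [gibbs, Pi.add_apply, neg_add, add_div, exp_add]
    ring
  rw [hratio, log_div (sum_exp_neg_div_pos β (z + g)).ne' hS.ne'] at hoeffding
  have := mul_le_mul_of_nonneg_left hoeffding hβ.le
  rw [mul_add, mul_sum_mul_neg_div hβ.ne'] at this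
  rw [entropyConjugate_eq, entropyConjugate_eq]
  have hquad : β * ((‖g‖ / β) ^ 2 / 2) = ‖g‖ ^ 2 / (2 * β) := by field_simp
  linear_combination this + hquad

theorem sum_gibbs_sub_mul_le [Nonempty ι] {β β' : ℝ} (hβ : 0 < β) (hββ' : β ≤ β')
    (z g θ : ι → ℝ) :
    ∑ j, (gibbs β z j - θ j) * g j ≤
      (entropyConjugate β z + ∑ j, θ j * z j) -
        (entropyConjugate β' (z + g) + ∑ j, θ j * (z + g) j) + ‖g‖ ^ 2 / (2 * β) := by
  simp only [sub_mul, Finset.sum_sub_distrib, Pi.add_apply, mul_add, Finset.sum_add_distrib]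
  linarith [entropyConjugate_add_le hβ z g, entropyConjugate_le_of_le hβ hββ' (z + g)]

end EntropyConjugate

/-- Mirror-descent telescoping lemma (Juditsky et al., Proposition 2):
with increasing regularization parameters `β_t`, iterates `ξ_t = ξ_{t-1} + g_t`,
`ξ_0 = 0`, and `θ_{t-1} = −∇R*_{β_{t-1}}(ξ_{t-1})` the softmax, for every `θ ∈ Δ_M`,
`Σ_t ⟨θ_{t-1} − θ, g_t⟩ ≤ β_T R(θ) + Σ_t ‖g_t‖_∞²/(2β_{t-1})`. -/
theorem mirror_descent_regret_bound (M : ℕ) (hM : 1 ≤ M) (T : ℕ)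
    (β : ℕ → ℝ) (hβpos : ∀ t, 0 < β t) (hβmono : Monotone β)
    (g : ℕ → Fin M → ℝ) (ξ : ℕ → Fin M → ℝ) (θs : ℕ → Fin M → ℝ)
    (hξ0 : ξ 0 = 0) (hξ : ∀ t, ξ (t + 1) = ξ t + g (t + 1))
    (hθs : ∀ t, θs t = fun j =>
        Real.exp (-ξ t j / β t) / ∑ k, Real.exp (-ξ t k / β t))
    (θ : Fin M → ℝ) (hθ : θ ∈ stdSimplex ℝ (Fin M)) :
    ∑ t ∈ Finset.range T, ∑ j, (θs t j - θ j) * g (t + 1) j ≤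
      β T * (Real.log M + ∑ j, θ j * Real.log (θ j)) +
        ∑ t ∈ Finset.range T, ‖g (t + 1)‖ ^ 2 / (2 * β t) := by
  have : Nonempty (Fin M) := Fin.pos_iff_nonempty.mp hM
  set Ψ : ℕ → ℝ := fun t => entropyConjugate (β t) (ξ t) + ∑ j, θ j * ξ t j
  have hstep (t : ℕ) :
      ∑ j, (θs t j - θ j) * g (t + 1) j ≤ Ψ t - Ψ (t + 1) + ‖g (t + 1)‖ ^ 2 / (2 * β t) := by
    have hθt : θs t = gibbs (β t) (ξ t) := hθs t
    simp only [Ψ, hθt, hξ t]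
    exact sum_gibbs_sub_mul_le (hβpos t) (hβmono t.le_succ) (ξ t) (g (t + 1)) θ
  have hΨ0 : Ψ 0 = 0 := by simp [Ψ, hξ0, entropyConjugate_zero]
  have hΨT : -Ψ T ≤ β T * normalizedEntropy θ := by
    linarith [fenchel_young_entropyConjugate (hβpos T) (ξ T) hθ]
  rw [normalizedEntropy, Fintype.card_fin] at hΨT
  calc _ ≤ ∑ t ∈ range T, (Ψ t - Ψ (t + 1) + ‖g (t + 1)‖ ^ 2 / (2 * β t)) :=
        sum_le_sum fun t _ => hstep t
    _ = Ψ 0 - Ψ T + ∑ t ∈ range T, ‖g (t + 1)‖ ^ 2 / (2 * β t) := by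
        rw [sum_add_distrib, sum_range_sub']
    _ ≤ _ := by linarith
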